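/- Let X and Y be subspaces of F_q^{n+1}, neither contained in the hyperplane F_q^n, such that Y covers X. Then the bipartite graph of covering relations between the H(n+1,q)-orbit [Y] of Y and the orbit [X] of X is biregular: each element of [Y] covers exactly q elements of [X], and each element of [X] is covered by exactly one element of [Y]. -/

import Mathlib

/-- The matrix `[[I, a], [0, 1]]` over `F`, indexed by `Fin n ⊕ Unit`. -/
def Hmat {F : Type} [Field F] {n : ℕ} (a : Fin n → F) :
    Matrix (Fin n ⊕ Unit) (Fin n ⊕ Unit) F :=
  Matrix.fromBlocks 1 (Matrix.of fun i (_ : Unit) => a i) 0 1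

/-- The action of the element `[[I, a], [0, 1]]` of `H(n+1, q)` on subspaces of
`F_q^{n+1}`. -/
def actH {F : Type} [Field F] {n : ℕ} (a : Fin n → F)
    (X : Submodule F (Fin n ⊕ Unit → F)) : Submodule F (Fin n ⊕ Unit → F) :=
  Submodule.map (Matrix.mulVecLin (Hmat a)) X

/-! The matrix `Hmat a` is the transvection `v ↦ v + v_∞ • (a, 0)`, so `actH` is an action of the
additive group `F^n` on subspaces. If `X ⊄ F^n`, choose `x ∈ X` with `x_∞ = 1`; for `X ≤ Y` the
inclusion `a +ᵥ X ≤ Y` forces `(a, 0) = (a +ᵥ x) - x ∈ Y`, and conversely `(a, 0) ∈ Y` gives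
`a +ᵥ Y = Y`. Hence the stabilizer of `X` is `X ∩ F^n`, and `a +ᵥ X ≤ b +ᵥ Y` iff
`a +ᵥ Y = b +ᵥ Y`. So `a +ᵥ X` lies below exactly one element of `[Y]`, namely `a +ᵥ Y`, while the
elements of `[X]` below `b +ᵥ Y` form a fibre of `[X] → [Y]`, of size
`[Stab Y : Stab X] = q ^ (dim (Y ∩ F^n) - dim (X ∩ F^n)) = q`. -/

open Module LinearMap Submodule AddAction

section Transvection

variable {K V : Type*} [Field K] [AddCommGroup V] [Module K V] {f : Dual K V}
  {X Y : Submodule K V}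

theorem Submodule.exists_mem_apply_eq_one (hX : ¬ X ≤ ker f) : ∃ x ∈ X, f x = 1 := by
  obtain ⟨x, hxX, hx⟩ := SetLike.not_le_iff_exists.mp hX
  exact ⟨(f x)⁻¹ • x, X.smul_mem _ hxX, by simpa using inv_mul_cancel₀ hx⟩

theorem Submodule.map_transvection_le_iff (hX : ¬ X ≤ ker f) (hXY : X ≤ Y) (w : V) :
    X.map (transvection f w) ≤ Y ↔ w ∈ Y := by
  constructor
  · intro h
    obtain ⟨x, hxX, hx⟩ := X.exists_mem_apply_eq_one hX
    have hxw : x + w ∈ Y := by simpa [transvection.apply, hx] using h (mem_map_of_mem hxX)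
    simpa using Y.sub_mem hxw (hXY hxX)
  · rintro hw _ ⟨x, hxX, rfl⟩
    exact Y.add_mem (hXY hxX) (Y.smul_mem _ hw)

theorem Submodule.map_transvection_eq_self_iff (hX : ¬ X ≤ ker f) {w : V} (hw : f w = 0) :
    X.map (transvection f w) = X ↔ w ∈ X := by
  refine ⟨fun h => (X.map_transvection_le_iff hX le_rfl w).mp h.le, fun hwX => ?_⟩
  refine le_antisymm ((X.map_transvection_le_iff hX le_rfl w).mpr hwX) ?_
  calc X = (X.map (transvection f (-w))).map (transvection f w) := by
        rw [← map_comp, transvection.comp_of_left_eq (by simpa using hw), add_neg_cancel,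
          transvection.of_right_eq_zero, map_id]
    _ ≤ X.map (transvection f w) :=
        map_mono ((X.map_transvection_le_iff hX le_rfl _).mpr (X.neg_mem hwX))

theorem Submodule.finrank_inf_ker_add_one [FiniteDimensional K V] (hX : ¬ X ≤ ker f) :
    finrank K ↥(X ⊓ ker f) + 1 = finrank K X := by
  have hf : f ≠ 0 := by rintro rfl; simp at hX
  have hsup : X ⊔ ker f = ⊤ := by
    rw [sup_comm, ← codisjoint_iff]
    exact (isCoatom_ker_of_surjective (f.surjective hf)).not_le_iff_codisjoint.mp hX
  have := finrank_sup_add_finrank_inf_eq X (ker f)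
  rw [hsup, finrank_top, ← Module.Dual.finrank_ker_add_one_of_ne_zero hf] at this
  omega

end Transvection

theorem Submodule.relIndex_toAddSubgroup {K V : Type*} [Field K] [AddCommGroup V] [Module K V]
    [FiniteDimensional K V] {P Q : Submodule K V} (h : P ≤ Q) :
    P.toAddSubgroup.relIndex Q.toAddSubgroup = Nat.card K ^ (finrank K Q - finrank K P) := by
  change Nat.card (Q ⧸ P.comap Q.subtype) = _
  rw [natCard_eq_pow_finrank (K := K), ← (P.comap Q.subtype).finrank_quotient_add_finrank,
    (comapSubtypeEquivOfLe h).finrank_eq, Nat.add_sub_cancel]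

theorem AddAction.natCard_fiber_eq_relIndex {G α : Type*} [AddGroup G] [AddAction G α]
    (x y : α) (b : G) :
    Nat.card {z : α // ∃ a : G, z = a +ᵥ x ∧ a +ᵥ y = b +ᵥ y} =
      (stabilizer G x).relIndex (stabilizer G y) := by
  have hstab : (stabilizer G x).addSubgroupOf (stabilizer G y) = stabilizer (stabilizer G y) x := by
    ext; rfl
  rw [AddSubgroup.relIndex, hstab, index_stabilizer, ← Nat.card_coe_set_eq]
  refine Nat.card_congr (Equiv.subtypeEquiv (toPerm (-b)) fun z => ?_)
  simp only [toPerm_apply, mem_orbit_iff, Subtype.exists, AddSubgroup.mk_vadd, mem_stabilizer_iff]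
  constructor
  · rintro ⟨a, rfl, ha⟩
    exact ⟨-b + a, by rw [add_vadd, ha, neg_vadd_vadd], by rw [add_vadd]⟩
  · rintro ⟨k, hk, hkz⟩
    refine ⟨b + k, ?_, by rw [add_vadd, hk]⟩
    rw [add_vadd, hkz, vadd_neg_vadd]

section HAction

variable {F : Type} [Field F] {n : ℕ}

def extendZero : (Fin n → F) →ₗ[F] (Fin n ⊕ Unit → F) where
  toFun a := Sum.elim a 0
  map_add' _ _ := by ext (_ | _) <;> simp
  map_smul' _ _ := by ext (_ | _) <;> simp

theorem proj_extendZero (a : Fin n → F) : proj (R := F) (Sum.inr ()) (extendZero a) = 0 := rfl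

theorem extendZero_injective : Function.Injective (extendZero (F := F) (n := n)) :=
  fun _ _ h => funext fun i => congrFun h (Sum.inl i)

theorem range_extendZero :
    range (extendZero (F := F) (n := n)) = ker (proj (R := F) (Sum.inr ())) := by
  ext v
  refine ⟨by rintro ⟨a, rfl⟩; exact proj_extendZero a, fun hv => ⟨fun i => v (Sum.inl i), ?_⟩⟩
  ext (i | ⟨⟩)
  · rfl
  · exact hv.symm

theorem finrank_comap_extendZero_add_one {Z : Submodule F (Fin n ⊕ Unit → F)}
    (hZ : ¬ Z ≤ ker (proj (Sum.inr ()))) : finrank F ↥(Z.comap extendZero) + 1 = finrank F Z := by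
  rw [(equivMapOfInjective _ extendZero_injective _).finrank_eq, map_comap_eq, range_extendZero,
    inf_comm, Z.finrank_inf_ker_add_one hZ]

theorem mulVecLin_Hmat (a : Fin n → F) :
    (Hmat a).mulVecLin = transvection (proj (Sum.inr ())) (extendZero a) := by
  ext v (i | ⟨⟩) <;>
    simp [Hmat, Matrix.mulVec, dotProduct, Fintype.sum_sum_type, Matrix.one_apply,
      transvection.apply, extendZero, mul_comm]

theorem actH_eq_map (a : Fin n → F) (X : Submodule F (Fin n ⊕ Unit → F)) :
    actH a X = X.map (transvection (proj (Sum.inr ())) (extendZero a)) := by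
  rw [actH, mulVecLin_Hmat]

instance : AddAction (Fin n → F) (Submodule F (Fin n ⊕ Unit → F)) where
  vadd := actH
  zero_vadd X := by
    change actH 0 X = X
    rw [actH_eq_map, map_zero, transvection.of_right_eq_zero, map_id]
  add_vadd a b X := by
    change actH (a + b) X = actH a (actH b X)
    rw [actH_eq_map, actH_eq_map, actH_eq_map, ← map_comp,
      transvection.comp_of_left_eq (proj_extendZero b), map_add]

theorem vadd_eq_map (a : Fin n → F) (X : Submodule F (Fin n ⊕ Unit → F)) :
    a +ᵥ X = X.map (transvection (proj (Sum.inr ())) (extendZero a)) :=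
  actH_eq_map a X

theorem finrank_vadd (a : Fin n → F) (X : Submodule F (Fin n ⊕ Unit → F)) :
    finrank F ↥(a +ᵥ X) = finrank F X := by
  rw [vadd_eq_map, ← LinearEquiv.transvection.coe_toLinearMap (proj_extendZero a),
    LinearEquiv.finrank_map_eq]

theorem vadd_le_vadd_iff (a : Fin n → F) {P Q : Submodule F (Fin n ⊕ Unit → F)} :
    a +ᵥ P ≤ a +ᵥ Q ↔ P ≤ Q := by
  rw [vadd_eq_map, vadd_eq_map]
  exact map_le_map_iff_of_injective (LinearEquiv.transvection (proj_extendZero a)).injective P Q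

variable {X Y : Submodule F (Fin n ⊕ Unit → F)}

theorem stabilizer_eq_comap_extendZero (hX : ¬ X ≤ ker (proj (Sum.inr ()))) :
    stabilizer (Fin n → F) X = (X.comap extendZero).toAddSubgroup := by
  ext a
  rw [mem_stabilizer_iff, vadd_eq_map]
  exact X.map_transvection_eq_self_iff hX (proj_extendZero a)

theorem vadd_le_vadd_iff_vadd_eq (hX : ¬ X ≤ ker (proj (Sum.inr ()))) (hXY : X ≤ Y)
    (a b : Fin n → F) : a +ᵥ X ≤ b +ᵥ Y ↔ a +ᵥ Y = b +ᵥ Y := by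
  obtain ⟨c, rfl⟩ : ∃ c, a = b + c := ⟨-b + a, by abel⟩
  rw [add_vadd, add_vadd, vadd_le_vadd_iff, vadd_left_cancel_iff, vadd_eq_map c X, vadd_eq_map,
    X.map_transvection_le_iff hX hXY, Y.map_transvection_eq_self_iff (fun h => hX (hXY.trans h))
      (proj_extendZero c)]

theorem vadd_covers_vadd_iff (hX : ¬ X ≤ ker (proj (Sum.inr ())))
    (hcov : X < Y ∧ finrank F Y = finrank F X + 1) (a b : Fin n → F) :
    (a +ᵥ X < b +ᵥ Y ∧ finrank F ↥(b +ᵥ Y) = finrank F ↥(a +ᵥ X) + 1) ↔ a +ᵥ Y = b +ᵥ Y := by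
  rw [← vadd_le_vadd_iff_vadd_eq hX hcov.1.le, finrank_vadd, finrank_vadd]
  refine ⟨fun h => h.1.le, fun hle => ⟨hle.lt_of_ne fun he => ?_, hcov.2⟩⟩
  have := congrArg (fun Z : Submodule F (Fin n ⊕ Unit → F) => finrank F Z) he
  simp only [finrank_vadd] at this
  omega

theorem relIndex_stabilizer_eq_card (hX : ¬ X ≤ ker (proj (Sum.inr ())))
    (hcov : X < Y ∧ finrank F Y = finrank F X + 1) :
    (stabilizer (Fin n → F) X).relIndex (stabilizer (Fin n → F) Y) = Nat.card F := by
  have hY : ¬ Y ≤ ker (proj (Sum.inr ())) := fun h => hX (hcov.1.le.trans h)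
  have hXbar := finrank_comap_extendZero_add_one hX
  have hYbar := finrank_comap_extendZero_add_one hY
  rw [stabilizer_eq_comap_extendZero hX, stabilizer_eq_comap_extendZero hY,
    relIndex_toAddSubgroup (comap_mono hcov.1.le), show finrank F ↥(Y.comap extendZero) -
      finrank F ↥(X.comap extendZero) = 1 by omega, pow_one]

end HAction

theorem H_orbits_covering_biregular_general (F : Type) [Field F] [Fintype F] (n : ℕ)
    (Hyp : Submodule F (Fin n ⊕ Unit → F))
    (hHyp : Hyp = LinearMap.ker (LinearMap.proj (R := F) (Sum.inr () : Fin n ⊕ Unit)))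
    (X Y : Submodule F (Fin n ⊕ Unit → F))
    (hX : ¬ X ≤ Hyp)
    (hcov : X < Y ∧ Module.finrank F ↥Y = Module.finrank F ↥X + 1) :
    (∀ Y' : Submodule F (Fin n ⊕ Unit → F), (∃ a : Fin n → F, Y' = actH a Y) →
      Nat.card {X' : Submodule F (Fin n ⊕ Unit → F) //
        (∃ a : Fin n → F, X' = actH a X) ∧ X' < Y' ∧
          Module.finrank F ↥Y' = Module.finrank F ↥X' + 1} = Fintype.card F) ∧
    (∀ X' : Submodule F (Fin n ⊕ Unit → F), (∃ a : Fin n → F, X' = actH a X) →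
      Nat.card {Y' : Submodule F (Fin n ⊕ Unit → F) //
        (∃ a : Fin n → F, Y' = actH a Y) ∧ X' < Y' ∧
          Module.finrank F ↥Y' = Module.finrank F ↥X' + 1} = 1) := by
  subst hHyp
  refine ⟨?_, ?_⟩
  · rintro _ ⟨b, rfl⟩
    calc Nat.card _ = Nat.card {X' // ∃ a : Fin n → F, X' = a +ᵥ X ∧ a +ᵥ Y = b +ᵥ Y} :=
          Nat.card_congr <| Equiv.subtypeEquivRight fun X' => by
            constructor
            · rintro ⟨⟨a, rfl⟩, h⟩
              exact ⟨a, rfl, (vadd_covers_vadd_iff hX hcov a b).mp h⟩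
            · rintro ⟨a, rfl, h⟩
              exact ⟨⟨a, rfl⟩, (vadd_covers_vadd_iff hX hcov a b).mpr h⟩
      _ = (stabilizer _ X).relIndex (stabilizer _ Y) := natCard_fiber_eq_relIndex X Y b
      _ = Fintype.card F := by
        rw [relIndex_stabilizer_eq_card hX hcov, Nat.card_eq_fintype_card]
  · rintro _ ⟨a, rfl⟩
    calc Nat.card _ = Nat.card {Y' // Y' = a +ᵥ Y} :=
          Nat.card_congr <| Equiv.subtypeEquivRight fun Y' => by
            constructor
            · rintro ⟨⟨b, rfl⟩, h⟩
              exact ((vadd_covers_vadd_iff hX hcov a b).mp h).symm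
            · rintro rfl
              exact ⟨⟨a, rfl⟩, (vadd_covers_vadd_iff hX hcov a a).mpr rfl⟩
      _ = 1 := Nat.card_unique

/-- Suppose `Y` covers `X` in the subspace lattice of `F_q^{n+1}` and neither is contained
in the hyperplane `F_q^n`.  Then the bipartite graph of covering relations between the
`H(n+1, q)`-orbits `[Y]` and `[X]` is biregular: every element of `[Y]` covers exactly `q`
elements of `[X]`, and every element of `[X]` is covered by exactly one element of `[Y]`. -/
theorem H_orbits_covering_biregular (F : Type) [Field F] [Fintype F] (n : ℕ)
    (Hyp : Submodule F (Fin n ⊕ Unit → F))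
    (hHyp : Hyp = LinearMap.ker (LinearMap.proj (R := F) (Sum.inr () : Fin n ⊕ Unit)))
    (X Y : Submodule F (Fin n ⊕ Unit → F))
    (hX : ¬ X ≤ Hyp) (hY : ¬ Y ≤ Hyp)
    (hcov : X < Y ∧ Module.finrank F ↥Y = Module.finrank F ↥X + 1) :
    (∀ Y' : Submodule F (Fin n ⊕ Unit → F), (∃ a : Fin n → F, Y' = actH a Y) →
      Nat.card {X' : Submodule F (Fin n ⊕ Unit → F) //
        (∃ a : Fin n → F, X' = actH a X) ∧ X' < Y' ∧
          Module.finrank F ↥Y' = Module.finrank F ↥X' + 1} = Fintype.card F) ∧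
    (∀ X' : Submodule F (Fin n ⊕ Unit → F), (∃ a : Fin n → F, X' = actH a X) →
      Nat.card {Y' : Submodule F (Fin n ⊕ Unit → F) //
        (∃ a : Fin n → F, Y' = actH a Y) ∧ X' < Y' ∧
          Module.finrank F ↥Y' = Module.finrank F ↥X' + 1} = 1) :=
  H_orbits_covering_biregular_general F n Hyp hHyp X Y hX hcov
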